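/- A problem f :⊆ ℕ^ℕ ⇉ ℕ^ℕ is effectively discontinuous if and only if Player I has a winning strategy in the Wadge game of f. -/

import Mathlib

noncomputable section

/-- Baire space `ℕ^ℕ`. -/
abbrev Baire : Type := ℕ → ℕ

/-- The Cantor pairing `⟨n,k⟩ = (n+k)(n+k+1)/2 + k`. -/
def cpair (n k : ℕ) : ℕ := (n + k) * (n + k + 1) / 2 + k

/-- The inverse of the Cantor pairing. -/
noncomputable def cunpair (m : ℕ) : ℕ × ℕ :=
  Classical.epsilon fun x : ℕ × ℕ => cpair x.1 x.2 = m

/-- A fixed bijective numbering `w : ℕ → List ℕ` of finite words. -/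
def word (n : ℕ) : List ℕ := Denumerable.ofNat (List ℕ) n

/-- `l` is a finite prefix of the infinite sequence `p`. -/
def IsPrefixOf (l : List ℕ) (p : Baire) : Prop := l = (List.range l.length).map p

/-- Two words are comparable in the prefix order. -/
def WordComparable (u v : List ℕ) : Prop := u <+: v ∨ v <+: u

/-- The word `w(n_i)` decoded from the `i`-th entry of the code `q`. -/
noncomputable def wn (q : Baire) (i : ℕ) : List ℕ := word (cunpair (q i)).1

/-- The word `w(k_i)` decoded from the `i`-th entry of the code `q`. -/
noncomputable def wk (q : Baire) (i : ℕ) : List ℕ := word (cunpair (q i)).2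

/-- The code `q` is consistent. -/
def ConsistentCode (q : Baire) : Prop :=
  ∀ i j, WordComparable (wn q i) (wn q j) → WordComparable (wk q i) (wk q j)

/-- The continuous partial function `Φ_q :⊆ ℕ^ℕ → ℕ^ℕ` coded by `q`. -/
noncomputable def Phi (q : Baire) : Baire →. Baire := fun p =>
  ⟨ConsistentCode q ∧ ∀ m : ℕ, ∃ i, IsPrefixOf (wn q i) p ∧ m < (wk q i).length,
   fun _ => Classical.epsilon fun x : Baire =>
      ∀ i, IsPrefixOf (wn q i) p → IsPrefixOf (wk q i) x⟩

/-- The pairing `⟨q,p⟩` on Baire space. -/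
def bpair (q p : Baire) : Baire := fun n => if n % 2 = 0 then q (n / 2) else p (n / 2)

/-- Even part of a sequence. -/
def evens (r : Baire) : Baire := fun n => r (2 * n)

/-- Odd part of a sequence. -/
def odds (r : Baire) : Baire := fun n => r (2 * n + 1)

/-- The universal function `U(⟨q,p⟩) = Φ_q(p)`. -/
noncomputable def U : Baire →. Baire := fun r => Phi (evens r) (odds r)

/-- `h` is monotone for the prefix order. -/
def MonotoneWord (h : List ℕ → List ℕ) : Prop := ∀ u v, u <+: v → h u <+: h v

/-- `h` approximates the partial function `F`. -/
def Approximates (h : List ℕ → List ℕ) (F : Baire →. Baire) : Prop :=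
  ∀ p, ∀ hp : (F p).Dom,
    (∀ v, IsPrefixOf v p → IsPrefixOf (h v) ((F p).get hp)) ∧
    (∀ m : ℕ, ∃ v, IsPrefixOf v p ∧ m < (h v).length)

/-- `F :⊆ ℕ^ℕ → ℕ^ℕ` is continuous: some monotone word function approximates it. -/
def ContinuousPF (F : Baire →. Baire) : Prop := ∃ h, MonotoneWord h ∧ Approximates h F

/-- `F :⊆ ℕ^ℕ → ℕ^ℕ` is computable: some computable monotone word function approximates it. -/
def ComputablePF (F : Baire →. Baire) : Prop :=
  ∃ h, Computable h ∧ MonotoneWord h ∧ Approximates h F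

/-- A total function is computable iff it is computable as a partial function with full domain. -/
def ComputableTotal (F : Baire → Baire) : Prop := ComputablePF fun p => Part.some (F p)

/-- A problem (multivalued function on Baire space). -/
abbrev Problem : Type := Baire → Set Baire

/-- `F` is a realizer of the problem `f`. -/
def Realizes (F : Baire →. Baire) (f : Problem) : Prop :=
  ∀ p, (f p).Nonempty → ∃ h : (F p).Dom, (F p).get h ∈ f p

/-- `f` is continuous: it has a continuous realizer. -/
def ContinuousProblem (f : Problem) : Prop := ∃ F, ContinuousPF F ∧ Realizes F f

/-- The discontinuity problem `DIS`. -/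
noncomputable def DIS : Problem := fun p => {q | q ∉ U p}

/-- `D` is a discontinuity function for `f`. -/
def DiscontinuityFunction (D : Baire → Baire) (f : Problem) : Prop :=
  ∀ q, (f (D q)).Nonempty ∧ ∀ y ∈ Phi q (D q), y ∉ f (D q)

/-- `f` is computably discontinuous. -/
def ComputablyDiscontinuous (f : Problem) : Prop :=
  ∃ D, ComputableTotal D ∧ DiscontinuityFunction D f

/-- `f` is effectively discontinuous. -/
def EffectivelyDiscontinuous (f : Problem) : Prop :=
  ∃ D : Baire → Baire, Continuous D ∧ DiscontinuityFunction D f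

/-- Weihrauch reducibility `f ≤_W g`. -/
def WeihrauchRed (f g : Problem) : Prop :=
  ∃ H K : Baire →. Baire, ComputablePF H ∧ ComputablePF K ∧
    ∀ G : Baire →. Baire, Realizes G g →
      Realizes (fun p => (K p).bind fun s => (G s).bind fun t => H (bpair p t)) f

/-- Strong Weihrauch reducibility `f ≤_sW g`. -/
def StrongWeihrauchRed (f g : Problem) : Prop :=
  ∃ H K : Baire →. Baire, ComputablePF H ∧ ComputablePF K ∧
    ∀ G : Baire →. Baire, Realizes G g →
      Realizes (fun p => (K p).bind fun s => (G s).bind fun t => H t) f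

/-- Continuous Weihrauch reducibility `f ≤*_W g`. -/
def ContWeihrauchRed (f g : Problem) : Prop :=
  ∃ H K : Baire →. Baire, ContinuousPF H ∧ ContinuousPF K ∧
    ∀ G : Baire →. Baire, Realizes G g →
      Realizes (fun p => (K p).bind fun s => (G s).bind fun t => H (bpair p t)) f

/-- Continuous strong Weihrauch reducibility `f ≤*_sW g`. -/
def ContStrongWeihrauchRed (f g : Problem) : Prop :=
  ∃ H K : Baire →. Baire, ContinuousPF H ∧ ContinuousPF K ∧
    ∀ G : Baire →. Baire, Realizes G g →
      Realizes (fun p => (K p).bind fun s => (G s).bind fun t => H t) f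

/-- Concatenation of the first `n` moves. -/
def concatN (ms : ℕ → List ℕ) (n : ℕ) : List ℕ := ((List.range n).map ms).flatten

/-- The concatenated play is infinite. -/
def PlayInf (ms : ℕ → List ℕ) : Prop := ∀ m : ℕ, ∃ n, m < (concatN ms n).length

/-- The infinite sequence determined by an infinite play. -/
noncomputable def playLim (ms : ℕ → List ℕ) : Baire :=
  Classical.epsilon fun p : Baire => ∀ n, IsPrefixOf (concatN ms n) p

/-- Player II wins the run of the Wadge game of `f` given by the moves `xs` of I and `ys` of II. -/
def WadgeIIWins (f : Problem) (xs ys : ℕ → List ℕ) : Prop :=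
  (PlayInf xs ∧ (f (playLim xs)).Nonempty) → (PlayInf ys ∧ playLim ys ∈ f (playLim xs))

/-- The list of first `n` moves. -/
def histW (xs : ℕ → List ℕ) (n : ℕ) : List (List ℕ) := (List.range n).map xs

/-- `σ` is a winning strategy for Player II in the Wadge game of `f`. -/
def WadgeWinningII (f : Problem) (σ : List (List ℕ) → List ℕ) : Prop :=
  ∀ xs : ℕ → List ℕ, WadgeIIWins f xs fun i => σ (histW xs (i + 1))

/-- `σ` is a winning strategy for Player I in the Wadge game of `f`. -/
def WadgeWinningI (f : Problem) (σ : List (List ℕ) → List ℕ) : Prop :=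
  ∀ ys : ℕ → List ℕ, ¬ WadgeIIWins f (fun i => σ (histW ys i)) ys

/-- The list of first `n` values of a sequence. -/
def histN (x : Baire) (n : ℕ) : List ℕ := (List.range n).map x

/-- Player II wins the run `(x,y)` of the Lipschitz game of `f`. -/
def LipIIWins (f : Problem) (x y : Baire) : Prop := (f x).Nonempty → y ∈ f x

/-- `σ` is a winning strategy for Player II in the Lipschitz game of `f`. -/
def LipWinningII (f : Problem) (σ : List ℕ → ℕ) : Prop :=
  ∀ x : Baire, LipIIWins f x fun i => σ (histN x (i + 1))

/-- `σ` is a winning strategy for Player I in the Lipschitz game of `f`. -/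
def LipWinningI (f : Problem) (σ : List ℕ → ℕ) : Prop :=
  ∀ y : Baire, ¬ LipIIWins f (fun i => σ (histN y i)) y

/-- `σ` is a winning strategy for Player II in the Gale–Stewart game `A`. -/
def GSWinningII (A : Set Baire) (σ : List ℕ → ℕ) : Prop :=
  ∀ x : Baire, bpair x (fun i => σ (histN x (i + 1))) ∈ A

/-- `σ` is a winning strategy for Player I in the Gale–Stewart game `A`. -/
def GSWinningI (A : Set Baire) (σ : List ℕ → ℕ) : Prop :=
  ∀ y : Baire, bpair (fun i => σ (histN y i)) y ∉ A

/-- The totalization `Tf` of `f`. -/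
def Totalization (f : Problem) : Problem := fun p => {q | (f p).Nonempty → q ∈ f p}

/-- The paired graph `⟨graph(Tf)⟩ ⊆ ℕ^ℕ`. -/
def pairedGraph (f : Problem) : Set Baire :=
  {r | ∃ x y : Baire, r = bpair x y ∧ y ∈ Totalization f x}

/-- Domain of the word concatenation map `w*`. -/
def wstarDom (p : Baire) : Prop := PlayInf fun i => word (p i)

/-- The word concatenation map `w* : p ↦ w(p 0) w(p 1) ⋯` (on its domain). -/
noncomputable def wstar (p : Baire) : Baire := playLim fun i => word (p i)

/-- The problem `f^w = w*⁻¹ ∘ f ∘ w*`. -/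
noncomputable def wordLift (f : Problem) : Problem := fun p =>
  {q | wstarDom p ∧ (f (wstar p)).Nonempty ∧ wstarDom q ∧ wstar q ∈ f (wstar p)}

/-- The `i`-th component of a tupled sequence. -/
def tupleComp (p : Baire) (i : ℕ) : Baire := fun n => p (cpair i n)

/-- The parallelization `⟨f⟩` of `f`. -/
def Parallelization (f : Problem) : Problem := fun p =>
  {q | ∀ i, tupleComp q i ∈ f (tupleComp p i)}

/-- Turing reducibility: `p` is computable relative to the oracle `q`. -/
def TuringLe (p q : Baire) : Prop := ∃ F : Baire →. Baire, ComputablePF F ∧ p ∈ F q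

end


/-!
If `D` is a continuous discontinuity function for `f`, Player I can build a code `q` during the
run whose `i`-th entry pairs I's and II's plays after `i` rounds, and play the part of `D q` that
the finite part of `q` built so far already determines. Then I's play is `x = D q`, and any
infinite play `y` of II is `Φ_q(D q)`, so `y ∈ f x` is impossible.

Conversely, for a winning strategy `σ` of I, let `D q` be I's play against the Player II who
copies out what `Φ_q` outputs on I's moves so far. Only finitely many entries of `q` are read in
each round, so `D` is continuous; and if `Φ_q(D q) ∈ f(D q)`, this Player II would win.
-/

open Filter Topology

section CantorPairing

lemma two_mul_cpair (n k : ℕ) : 2 * cpair n k = (n + k) * (n + k + 1) + 2 * k := by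
  have h : 2 * ((n + k) * (n + k + 1) / 2) = (n + k) * (n + k + 1) :=
    Nat.two_mul_div_two_of_even (Nat.even_mul_succ_self _)
  unfold cpair
  omega

lemma cpair_lt_cpair_of_add_lt {n k n' k' : ℕ} (h : n + k < n' + k') :
    cpair n k < cpair n' k' := by
  have := two_mul_cpair n k
  have := two_mul_cpair n' k'
  have : (n + k) * (n + k + 1) + 2 * k < (n' + k') * (n' + k' + 1) :=
    calc (n + k) * (n + k + 1) + 2 * k < (n + k + 1) * (n + k + 2) := by nlinarith
      _ ≤ (n' + k') * (n' + k' + 1) := Nat.mul_le_mul (by omega) (by omega)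
  omega

lemma cpair_injective : Function.Injective2 cpair := by
  intro n n' k k' h
  have hs : n + k = n' + k' := by
    rcases lt_trichotomy (n + k) (n' + k') with hlt | heq | hgt
    · exact absurd h (cpair_lt_cpair_of_add_lt hlt).ne
    · exact heq
    · exact absurd h (cpair_lt_cpair_of_add_lt hgt).ne'
  have h₁ := two_mul_cpair n k
  have h₂ := two_mul_cpair n' k'
  rw [hs] at h₁
  omega

lemma cunpair_cpair (n k : ℕ) : cunpair (cpair n k) = (n, k) := by
  have h := Classical.epsilon_spec (p := fun x : ℕ × ℕ => cpair x.1 x.2 = cpair n k) ⟨(n, k), rfl⟩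
  obtain ⟨h₁, h₂⟩ := cpair_injective h
  exact Prod.ext h₁ h₂

def codeEntry (u v : List ℕ) : ℕ := cpair (Encodable.encode u) (Encodable.encode v)

lemma wn_of_apply_eq {q : Baire} {i : ℕ} {u v : List ℕ} (h : q i = codeEntry u v) :
    wn q i = u := by
  simp [wn, h, codeEntry, cunpair_cpair, word, Denumerable.ofNat_encode]

lemma wk_of_apply_eq {q : Baire} {i : ℕ} {u v : List ℕ} (h : q i = codeEntry u v) :
    wk q i = v := by
  simp [wk, h, codeEntry, cunpair_cpair, word, Denumerable.ofNat_encode]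

end CantorPairing

section Prefixes

variable {α : Type*}

lemma map_range_take (f : ℕ → α) {i n : ℕ} (h : i ≤ n) :
    ((List.range n).map f).take i = (List.range i).map f := by
  simp [← List.map_take, List.take_range, Nat.min_eq_left h]

lemma map_range_prefix (f : ℕ → α) {i n : ℕ} (h : i ≤ n) :
    (List.range i).map f <+: (List.range n).map f :=
  map_range_take f h ▸ List.take_prefix _ _

@[simp] lemma histN_length (p : Baire) (n : ℕ) : (histN p n).length = n := by
  simp [histN]

@[simp] lemma histW_length (ys : ℕ → List ℕ) (n : ℕ) : (histW ys n).length = n := by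
  simp [histW]

lemma dropLast_histW_succ (ys : ℕ → List ℕ) (n : ℕ) : (histW ys (n + 1)).dropLast = histW ys n := by
  simp [histW, List.range_succ]

lemma histW_eq_of_histW_eq {ys ys' : ℕ → List ℕ} {i n : ℕ} (h : histW ys' n = histW ys n)
    (hi : i ≤ n) : histW ys' i = histW ys i := by
  simpa only [histW, map_range_take _ hi] using congrArg (List.take i) h

lemma isPrefixOf_iff {l : List ℕ} {p : Baire} :
    IsPrefixOf l p ↔ ∀ i (h : i < l.length), l[i] = p i := by
  refine ⟨fun h i hi => ?_, fun h => List.ext_getElem (by simp) fun i h₁ _ => by simpa using h i h₁⟩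
  rw [List.getElem_of_eq h hi]
  simp

lemma IsPrefixOf.apply_eq {l : List ℕ} {p : Baire} (h : IsPrefixOf l p) {i : ℕ}
    (hi : i < l.length) : p i = l[i] :=
  (isPrefixOf_iff.1 h i hi).symm

lemma isPrefixOf_histN (p : Baire) (n : ℕ) : IsPrefixOf (histN p n) p := by
  simp [IsPrefixOf, histN]

lemma isPrefixOf_histN_iff {q q' : Baire} {n : ℕ} :
    IsPrefixOf (histN q n) q' ↔ q' ∈ PiNat.cylinder q n := by
  simp [isPrefixOf_iff, histN, eq_comm]

lemma IsPrefixOf.of_prefix {l l' : List ℕ} {p : Baire} (h : l <+: l') (h' : IsPrefixOf l' p) :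
    IsPrefixOf l p :=
  isPrefixOf_iff.2 fun i hi => by
    rw [h.getElem hi]
    exact isPrefixOf_iff.1 h' i (hi.trans_le h.length_le)

lemma IsPrefixOf.prefix_of_length_le {l l' : List ℕ} {p : Baire} (h : IsPrefixOf l p)
    (h' : IsPrefixOf l' p) (hle : l.length ≤ l'.length) : l <+: l' := by
  rw [List.prefix_iff_eq_take]
  refine List.ext_getElem (by simpa using hle) fun i h₁ h₂ => ?_
  rw [List.getElem_take, ← h.apply_eq h₁, ← h'.apply_eq]

lemma eq_of_forall_exists_isPrefixOf {p p' : Baire}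
    (h : ∀ m, ∃ l : List ℕ, IsPrefixOf l p ∧ IsPrefixOf l p' ∧ m < l.length) : p = p' := by
  funext m
  obtain ⟨l, hp, hp', hm⟩ := h m
  rw [hp.apply_eq hm, hp'.apply_eq hm]

lemma WordComparable.prefix_of_length_le {u v : List ℕ} (h : WordComparable u v)
    (hle : u.length ≤ v.length) : u <+: v := by
  rcases h with h | h
  · exact h
  · rw [h.eq_of_length (le_antisymm h.length_le hle)]

end Prefixes

section Plays

lemma concatN_succ (ms : ℕ → List ℕ) (n : ℕ) : concatN ms (n + 1) = concatN ms n ++ ms n := by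
  simp [concatN, List.range_succ]

lemma concatN_prefix (ms : ℕ → List ℕ) {n m : ℕ} (h : n ≤ m) :
    concatN ms n <+: concatN ms m :=
  (map_range_prefix ms h).flatten

lemma concatN_congr {ms ms' : ℕ → List ℕ} {n : ℕ} (h : ∀ i < n, ms' i = ms i) :
    concatN ms' n = concatN ms n :=
  congrArg List.flatten <| List.map_congr_left fun i hi => h i (List.mem_range.1 hi)

lemma concatN_drop_length {W : ℕ → List ℕ} (h₀ : W 0 = []) (hW : ∀ n, W n <+: W (n + 1))
    (n : ℕ) : concatN (fun i => (W (i + 1)).drop (W i).length) n = W n := by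
  induction n with
  | zero => exact h₀.symm
  | succ n ih => rw [concatN_succ, ih, ← List.prefix_append_drop (hW n)]

lemma playLim_spec (ms : ℕ → List ℕ) (n : ℕ) : IsPrefixOf (concatN ms n) (playLim ms) := by
  classical
  refine Classical.epsilon_spec (p := fun p : Baire => ∀ n, IsPrefixOf (concatN ms n) p)
    ⟨fun m => if h : ∃ n, m < (concatN ms n).length then
      (concatN ms (Nat.find h))[m]'(Nat.find_spec h) else 0, fun n => ?_⟩ n
  refine isPrefixOf_iff.2 fun i hi => ?_
  have hex : ∃ n', i < (concatN ms n').length := ⟨n, hi⟩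
  rw [dif_pos hex]
  rcases Nat.le_total n (Nat.find hex) with hle | hle
  · exact (concatN_prefix ms hle).getElem hi
  · exact ((concatN_prefix ms hle).getElem (Nat.find_spec hex)).symm

lemma playLim_eq {ms : ℕ → List ℕ} {p : Baire} (hinf : PlayInf ms)
    (h : ∀ n, IsPrefixOf (concatN ms n) p) : playLim ms = p :=
  eq_of_forall_exists_isPrefixOf fun m =>
    let ⟨n, hn⟩ := hinf m
    ⟨concatN ms n, playLim_spec ms n, h n, hn⟩

lemma continuous_playLim {X : Type*} [TopologicalSpace X] {ms : X → ℕ → List ℕ}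
    (hinf : ∀ x, PlayInf (ms x))
    (hloc : ∀ x n, ∀ᶠ x' in 𝓝 x, concatN (ms x') n = concatN (ms x) n) :
    Continuous fun x => playLim (ms x) := by
  refine continuous_pi fun m => ((IsLocallyConstant.iff_eventually_eq _).2 fun x => ?_).continuous
  obtain ⟨n, hn⟩ := hinf x m
  filter_upwards [hloc x n] with x' hx'
  have hn' : m < (concatN (ms x') n).length := hx' ▸ hn
  rw [(playLim_spec _ n).apply_eq hn', (playLim_spec _ n).apply_eq hn]
  exact List.getElem_of_eq hx' hn'

end Plays

section CourseOfValues

variable {α : Type*}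

def histRec (g : List α → α) : ℕ → List α
  | 0 => []
  | n + 1 => histRec g n ++ [g (histRec g n)]

def recSeq (g : List α → α) (n : ℕ) : α := g (histRec g n)

lemma histRec_eq_map (g : List α → α) (n : ℕ) : histRec g n = (List.range n).map (recSeq g) := by
  induction n with
  | zero => rfl
  | succ n ih => rw [histRec, List.range_succ, List.map_append, ← ih]; rfl

lemma recSeq_apply (g : List α → α) (n : ℕ) :
    recSeq g n = g ((List.range n).map (recSeq g)) := by
  rw [recSeq, histRec_eq_map]

@[simp] lemma histRec_length (g : List α → α) (n : ℕ) : (histRec g n).length = n := by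
  simp [histRec_eq_map]

lemma histRec_congr {g g' : List α → α} {n : ℕ} (h : ∀ s : List α, s.length < n → g' s = g s) :
    histRec g' n = histRec g n := by
  induction n with
  | zero => rfl
  | succ n ih =>
    have hn : histRec g' n = histRec g n := ih fun s hs => h s (by omega)
    rw [histRec, histRec, hn, h _ (by simp)]

lemma eventually_histRec_eq {ι : Type*} {l : Filter ι} {g : ι → List α → α} {i₀ : ι}
    (h : ∀ s, ∀ᶠ i in l, g i s = g i₀ s) (n : ℕ) :
    ∀ᶠ i in l, histRec (g i) n = histRec (g i₀) n := by
  induction n with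
  | zero => exact Eventually.of_forall fun _ => rfl
  | succ n ih =>
    filter_upwards [ih, h (histRec (g i₀) n)] with i hn hg
    rw [histRec, histRec, hn, hg]

end CourseOfValues

lemma PiNat.hasBasis_nhds_cylinder {E : ℕ → Type*} [∀ n, TopologicalSpace (E n)]
    [∀ n, DiscreteTopology (E n)] (x : ∀ n, E n) :
    (𝓝 x).HasBasis (fun _ => True) (PiNat.cylinder x) := by
  refine ⟨fun s => ⟨fun hs => ?_, fun ⟨n, _, hn⟩ =>
    mem_of_superset ((PiNat.isOpen_cylinder E x n).mem_nhds (PiNat.self_mem_cylinder x n)) hn⟩⟩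
  obtain ⟨_, ⟨y, n, rfl⟩, hx, hs⟩ := (PiNat.isTopologicalBasis_cylinders E).mem_nhds_iff.1 hs
  exact ⟨n, trivial, PiNat.mem_cylinder_iff_eq.1 hx ▸ hs⟩

lemma mem_Phi {q p y : Baire} (hdom : (Phi q p).Dom)
    (hy : ∀ i, IsPrefixOf (wn q i) p → IsPrefixOf (wk q i) y) : y ∈ Phi q p := by
  refine Part.mem_mk_iff.2 ⟨hdom, eq_of_forall_exists_isPrefixOf fun m => ?_⟩
  have hspec := Classical.epsilon_spec
    (p := fun z : Baire => ∀ i, IsPrefixOf (wn q i) p → IsPrefixOf (wk q i) z) ⟨y, hy⟩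
  obtain ⟨i, hi, hm⟩ := hdom.2 m
  exact ⟨wk q i, hspec i hi, hy i hi, hm⟩

lemma WadgeWinningI.run {f : Problem} {σ : List (List ℕ) → List ℕ} (hσ : WadgeWinningI f σ)
    (ys : ℕ → List ℕ) :
    let xs := fun n => σ (histW ys n)
    PlayInf xs ∧ (f (playLim xs)).Nonempty ∧ ¬ (PlayInf ys ∧ playLim ys ∈ f (playLim xs)) := by
  have h := hσ ys
  unfold WadgeIIWins at h
  tauto

section ToStrategy

variable (D : Baire → Baire)

def extendByZero (s : List ℕ) : Baire := fun i => s.getD i 0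

lemma isPrefixOf_extendByZero (s : List ℕ) : IsPrefixOf s (extendByZero s) :=
  isPrefixOf_iff.2 fun _ hi => (List.getD_eq_getElem s 0 hi).symm

def OutputDecided (s : List ℕ) (m : ℕ) : Prop :=
  ∀ q, IsPrefixOf s q → histN (D q) m = histN (D (extendByZero s)) m

open Classical in
/-- The output of `D` decided on the inputs extending `s`; the search is cut at `s.length` only
to make it finite. -/
noncomputable def decided (s : List ℕ) : List ℕ :=
  histN (D (extendByZero s)) (Nat.findGreatest (OutputDecided D s) s.length)

variable {D}

lemma decided_isPrefixOf {s : List ℕ} {q : Baire} (h : IsPrefixOf s q) :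
    IsPrefixOf (decided D s) (D q) := by
  classical
  have hdec : OutputDecided D s (Nat.findGreatest (OutputDecided D s) s.length) :=
    Nat.findGreatest_spec (Nat.zero_le _) (fun _ _ => rfl : OutputDecided D s 0)
  rw [decided, ← hdec q h]
  exact isPrefixOf_histN _ _

lemma length_decided_le (s : List ℕ) : (decided D s).length ≤ s.length := by
  classical
  simpa [decided] using Nat.findGreatest_le _

lemma le_length_decided {s : List ℕ} {m : ℕ} (hm : m ≤ s.length) (h : OutputDecided D s m) :
    m ≤ (decided D s).length := by
  classical
  simpa [decided] using Nat.le_findGreatest hm h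

lemma decided_nil : decided D [] = [] :=
  List.eq_nil_of_length_eq_zero (Nat.le_zero.1 (length_decided_le []))

lemma decided_prefix {s s' : List ℕ} (h : s <+: s') : decided D s <+: decided D s' := by
  have hs : IsPrefixOf s (extendByZero s') := (isPrefixOf_extendByZero s').of_prefix h
  refine (decided_isPrefixOf hs).prefix_of_length_le
    (decided_isPrefixOf (isPrefixOf_extendByZero s')) ?_
  refine le_length_decided ((length_decided_le s).trans h.length_le) fun q hq => ?_
  have hq' : IsPrefixOf (decided D s) (D q) := decided_isPrefixOf (hq.of_prefix h)
  have hs' : IsPrefixOf (decided D s) (D (extendByZero s')) := decided_isPrefixOf hs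
  exact hq'.symm.trans hs'

lemma Continuous.exists_le_length_decided (hD : Continuous D) (q : Baire) (m : ℕ) :
    ∃ n, m ≤ (decided D (histN q n)).length := by
  obtain ⟨N, -, hN⟩ := (PiNat.hasBasis_nhds_cylinder q).mem_iff.1 <|
    hD.continuousAt.preimage_mem_nhds <|
      (PiNat.isOpen_cylinder _ (D q) m).mem_nhds (PiNat.self_mem_cylinder _ m)
  have hagree : ∀ q', IsPrefixOf (histN q (max N m)) q' → histN (D q') m = histN (D q) m := by
    intro q' hq'
    have hq'N : q' ∈ PiNat.cylinder q N :=
      PiNat.cylinder_anti q (le_max_left N m) (isPrefixOf_histN_iff.1 hq')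
    simpa [histN] using fun i hi => hN hq'N i hi
  refine ⟨max N m, le_length_decided (by simp) fun q' hq' => ?_⟩
  rw [hagree q' hq', hagree _ (isPrefixOf_extendByZero _)]

variable (D)

noncomputable def discCode (ys : ℕ → List ℕ) : Baire :=
  recSeq fun s => codeEntry (decided D s) (concatN ys s.length)

lemma histN_discCode (ys : ℕ → List ℕ) (n : ℕ) :
    histN (discCode D ys) n = histRec (fun s => codeEntry (decided D s) (concatN ys s.length)) n :=
  (histRec_eq_map _ n).symm

lemma discCode_apply (ys : ℕ → List ℕ) (i : ℕ) :
    discCode D ys i = codeEntry (decided D (histN (discCode D ys) i)) (concatN ys i) := by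
  rw [histN_discCode]
  simp [discCode, recSeq]

/-- Padding `hy` with `[]` is harmless: the first `hy.length + 1` entries of the code only read
the moves in `hy`. -/
noncomputable def strategyI (hy : List (List ℕ)) : List ℕ :=
  let q := discCode D fun i => hy.getD i []
  (decided D (histN q (hy.length + 1))).drop (decided D (histN q hy.length)).length

lemma histN_discCode_congr {ys ys' : ℕ → List ℕ} {n : ℕ} (h : ∀ i < n, ys' i = ys i) :
    histN (discCode D ys') (n + 1) = histN (discCode D ys) (n + 1) := by
  rw [histN_discCode, histN_discCode]
  exact histRec_congr fun s hs => by
    rw [concatN_congr fun i hi => h i (by omega)]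

lemma strategyI_histW (ys : ℕ → List ℕ) (n : ℕ) :
    strategyI D (histW ys n) = (decided D (histN (discCode D ys) (n + 1))).drop
      (decided D (histN (discCode D ys) n)).length := by
  have hys : ∀ i < n, (histW ys n).getD i [] = ys i := fun i hi => by
    simp [histW, hi]
  have h₁ := histN_discCode_congr D hys
  have h₀ : histN (discCode D fun i => (histW ys n).getD i []) n = histN (discCode D ys) n := by
    simpa only [histN, map_range_take _ (Nat.le_succ n)] using congrArg (List.take n) h₁
  simp only [strategyI, histW_length, h₀, h₁]

lemma concatN_strategyI (ys : ℕ → List ℕ) (n : ℕ) :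
    concatN (fun i => strategyI D (histW ys i)) n = decided D (histN (discCode D ys) n) := by
  simp only [strategyI_histW]
  exact concatN_drop_length (W := fun n => decided D (histN (discCode D ys) n)) decided_nil
    (fun n => decided_prefix (map_range_prefix _ n.le_succ)) n

variable {D}

lemma wadgeWinningI_strategyI {f : Problem} (hD : Continuous D)
    (hdisc : DiscontinuityFunction D f) : WadgeWinningI f (strategyI D) := by
  intro ys hwin
  set q := discCode D ys
  have hxs : PlayInf fun n => strategyI D (histW ys n) := fun m => by
    obtain ⟨n, hn⟩ := hD.exists_le_length_decided q (m + 1)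
    exact ⟨n, by rw [concatN_strategyI]; exact hn⟩
  have hx : playLim (fun n => strategyI D (histW ys n)) = D q := playLim_eq hxs fun n => by
    rw [concatN_strategyI]
    exact decided_isPrefixOf (isPrefixOf_histN q n)
  obtain ⟨hys, hy⟩ := hwin ⟨hxs, hx ▸ (hdisc q).1⟩
  have hwn : ∀ i, wn q i = decided D (histN q i) := fun i => wn_of_apply_eq (discCode_apply D ys i)
  have hwk : ∀ i, wk q i = concatN ys i := fun i => wk_of_apply_eq (discCode_apply D ys i)
  have hcons : ConsistentCode q := fun i j _ => by
    rw [hwk, hwk]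
    exact (le_total i j).imp (concatN_prefix ys) (concatN_prefix ys)
  have hdom : (Phi q (D q)).Dom := ⟨hcons, fun m =>
    let ⟨n, hn⟩ := hys m
    ⟨n, hwn n ▸ decided_isPrefixOf (isPrefixOf_histN q n), hwk n ▸ hn⟩⟩
  refine (hdisc q).2 _ (mem_Phi hdom fun i _ => ?_) (hx ▸ hy)
  rw [hwk]
  exact playLim_spec ys i

end ToStrategy

section FromStrategy

noncomputable def phiApproxN (q : Baire) (u : List ℕ) : ℕ → List ℕ
  | 0 => []
  | n + 1 => if wn q n <+: u ∧ (phiApproxN q u n).length < (wk q n).length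
      then wk q n else phiApproxN q u n

/-- Only the first `u.length` entries of `q` are read, so that this depends continuously
on `q`. -/
noncomputable def phiApprox (q : Baire) (u : List ℕ) : List ℕ := phiApproxN q u u.length

lemma phiApproxN_eq_nil_or (q : Baire) (u : List ℕ) (n : ℕ) :
    phiApproxN q u n = [] ∨ ∃ i < n, wn q i <+: u ∧ phiApproxN q u n = wk q i := by
  induction n with
  | zero => exact Or.inl rfl
  | succ n ih =>
    rw [phiApproxN]
    split_ifs with h
    · exact Or.inr ⟨n, n.lt_succ_self, h.1, rfl⟩
    · exact ih.imp_right fun ⟨i, hi, hu, he⟩ => ⟨i, by omega, hu, he⟩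

lemma length_wk_le_phiApproxN (q : Baire) (u : List ℕ) {i n : ℕ} (hi : i < n)
    (hu : wn q i <+: u) : (wk q i).length ≤ (phiApproxN q u n).length := by
  induction n with
  | zero => omega
  | succ n ih =>
    rw [phiApproxN]
    split_ifs with h
    · rcases Nat.lt_succ_iff_lt_or_eq.1 hi with hi | rfl
      · omega
      · exact le_rfl
    · rcases Nat.lt_succ_iff_lt_or_eq.1 hi with hi | rfl
      · exact ih hi
      · exact not_lt.1 fun hlt => h ⟨hu, hlt⟩

lemma wk_prefix_phiApproxN {q : Baire} (hq : ConsistentCode q) {u : List ℕ} {i n : ℕ}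
    (hi : i < n) (hu : wn q i <+: u) : wk q i <+: phiApproxN q u n := by
  have hle := length_wk_le_phiApproxN q u hi hu
  rcases phiApproxN_eq_nil_or q u n with h | ⟨j, -, hj, h⟩
  · rw [h] at hle ⊢
    rw [List.eq_nil_of_length_eq_zero (Nat.le_zero.1 hle)]
  · rw [h] at hle ⊢
    exact (hq i j (List.prefix_or_prefix_of_prefix hu hj)).prefix_of_length_le hle

lemma phiApprox_prefix {q : Baire} (hq : ConsistentCode q) {u u' : List ℕ} (h : u <+: u') :
    phiApprox q u <+: phiApprox q u' := by
  rcases phiApproxN_eq_nil_or q u u.length with h₀ | ⟨i, hi, hu, he⟩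
  · rw [phiApprox, h₀]
    exact List.nil_prefix
  · rw [phiApprox, he]
    exact wk_prefix_phiApproxN hq (hi.trans_le h.length_le) (hu.trans h)

lemma phiApproxN_congr {q q' : Baire} {u : List ℕ} {n : ℕ} (h : ∀ i < n, q' i = q i) :
    phiApproxN q' u n = phiApproxN q u n := by
  induction n with
  | zero => rfl
  | succ n ih =>
    have hwn : wn q' n = wn q n := by rw [wn, h n n.lt_succ_self, wn]
    have hwk : wk q' n = wk q n := by rw [wk, h n n.lt_succ_self, wk]
    rw [phiApproxN, phiApproxN, ih fun i hi => h i (by omega), hwn, hwk]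

lemma eventually_phiApprox_eq (q : Baire) (u : List ℕ) :
    ∀ᶠ q' in 𝓝 q, phiApprox q' u = phiApprox q u :=
  mem_of_superset ((PiNat.hasBasis_nhds_cylinder q).mem_of_mem (i := u.length) trivial)
    fun _ hq' => phiApproxN_congr hq'

noncomputable def simulatorII (q : Baire) (hx : List (List ℕ)) : List ℕ :=
  (phiApprox q hx.flatten).drop (phiApprox q hx.dropLast.flatten).length

lemma eventually_simulatorII_eq (q : Baire) (hx : List (List ℕ)) :
    ∀ᶠ q' in 𝓝 q, simulatorII q' hx = simulatorII q hx := by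
  filter_upwards [eventually_phiApprox_eq q hx.flatten,
    eventually_phiApprox_eq q hx.dropLast.flatten] with q' h₁ h₂
  rw [simulatorII, simulatorII, h₁, h₂]

variable (σ : List (List ℕ) → List ℕ)

/-- II's moves when I plays `σ` and II plays `τ`, a strategy that sees I's moves so far. -/
noncomputable def runII (τ : List (List ℕ) → List ℕ) : ℕ → List ℕ :=
  recSeq fun hy => τ ((List.range (hy.length + 1)).map fun i => σ (hy.take i))

lemma runII_apply (τ : List (List ℕ) → List ℕ) (n : ℕ) :
    runII σ τ n = τ (histW (fun i => σ (histW (runII σ τ) i)) (n + 1)) := by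
  show recSeq _ n = _
  rw [recSeq_apply]
  simp only [List.length_map, List.length_range, histW]
  congr 1
  exact List.map_congr_left fun i hi => by
    rw [map_range_take _ (Nat.lt_succ_iff.1 (List.mem_range.1 hi))]
    rfl

noncomputable def movesI (q : Baire) (n : ℕ) : List ℕ :=
  σ (histW (runII σ (simulatorII q)) n)

noncomputable def discFun (q : Baire) : Baire := playLim (movesI σ q)

lemma concatN_runII_simulatorII {q : Baire} (hq : ConsistentCode q) (n : ℕ) :
    concatN (runII σ (simulatorII q)) n = phiApprox q (concatN (movesI σ q) n) := by
  have hmove : ∀ i, runII σ (simulatorII q) i = (phiApprox q (concatN (movesI σ q) (i + 1))).drop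
      (phiApprox q (concatN (movesI σ q) i)).length := fun i => by
    rw [runII_apply, simulatorII, dropLast_histW_succ]
    rfl
  rw [funext hmove]
  exact concatN_drop_length (W := fun i => phiApprox q (concatN (movesI σ q) i)) rfl
    (fun i => phiApprox_prefix hq (concatN_prefix _ i.le_succ)) n

lemma eventually_histW_runII_eq (q : Baire) (n : ℕ) :
    ∀ᶠ q' in 𝓝 q, histW (runII σ (simulatorII q')) n = histW (runII σ (simulatorII q)) n := by
  filter_upwards [eventually_histRec_eq (l := 𝓝 q) (i₀ := q)
    (g := fun q' hy => simulatorII q' ((List.range (hy.length + 1)).map fun i => σ (hy.take i)))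
    (fun _ => eventually_simulatorII_eq q _) n] with q' h
  rwa [histRec_eq_map, histRec_eq_map] at h

lemma continuous_discFun (hσ : ∀ ys, PlayInf fun n => σ (histW ys n)) :
    Continuous (discFun σ) :=
  continuous_playLim (fun q => hσ _) fun q n => by
    filter_upwards [eventually_histW_runII_eq σ q n] with q' h
    exact concatN_congr fun i hi => congrArg σ (histW_eq_of_histW_eq h hi.le)

variable {σ}

lemma discontinuityFunction_discFun {f : Problem} (hσ : WadgeWinningI f σ) :
    DiscontinuityFunction (discFun σ) f := by
  intro q
  obtain ⟨hxs, hne, hII⟩ := hσ.run (runII σ (simulatorII q))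
  change PlayInf (movesI σ q) at hxs
  refine ⟨hne, fun y hy hyf => hII ?_⟩
  have hdom : (Phi q (discFun σ q)).Dom := Part.dom_iff_mem.2 ⟨y, hy⟩
  have hcons : ConsistentCode q := hdom.1
  have hwk : ∀ i, IsPrefixOf (wn q i) (discFun σ q) →
      ∃ n, wk q i <+: concatN (runII σ (simulatorII q)) n := fun i hi => by
    obtain ⟨n, hn⟩ := hxs (max i (wn q i).length)
    have hpre := hi.prefix_of_length_le (playLim_spec (movesI σ q) n) (by omega)
    exact ⟨n, concatN_runII_simulatorII σ hcons n ▸ wk_prefix_phiApproxN hcons (by omega) hpre⟩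
  have hys : PlayInf (runII σ (simulatorII q)) := fun m => by
    obtain ⟨i, hi, hm⟩ := hdom.2 m
    obtain ⟨n, hn⟩ := hwk i hi
    exact ⟨n, hm.trans_le hn.length_le⟩
  have hy' : playLim (runII σ (simulatorII q)) ∈ Phi q (discFun σ q) := mem_Phi hdom fun i hi =>
    let ⟨n, hn⟩ := hwk i hi
    (playLim_spec _ n).of_prefix hn
  exact ⟨hys, Part.mem_unique hy hy' ▸ hyf⟩

end FromStrategy

/-- `f` is effectively discontinuous iff Player I has a winning strategy in the
Wadge game of `f`. -/
theorem effectively_discontinuous_iff_wadge_winning_I (f : Problem) :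
    EffectivelyDiscontinuous f ↔ ∃ σ : List (List ℕ) → List ℕ, WadgeWinningI f σ := by
  constructor
  · rintro ⟨D, hD, hdisc⟩
    exact ⟨strategyI D, wadgeWinningI_strategyI hD hdisc⟩
  · rintro ⟨σ, hσ⟩
    exact ⟨discFun σ, continuous_discFun σ fun ys => (hσ.run ys).1,
      discontinuityFunction_discFun hσ⟩
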